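/- Let R be a commutative ring, M and N R-modules, and φ: N → Hom_R(M,R) an R-linear map. For each commutative R-algebra S consider the induced map N ⊗_R S → Hom_S(M ⊗_R S, S) sending n ⊗ s to s times the S-linear extension of φ(n). These maps are surjective for every commutative R-algebra S if and only if M is a finitely generated projective R-module and φ is surjective. -/

import Mathlib

/-!
For `S = R` the base-changed map is `φ` itself, up to `R ⊗[R] -` ≅ `-`. For `S = R ⊕ M`, the
trivial square-zero extension, surjectivity hits the `S`-linear map `1 ⊗ m ↦ (0, m)`, which is
then a finite sum `∑ cᵢ • (extension of φ vᵢ)`; its `M`-component gives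
`m = ∑ φ(vᵢ)(m) • (cᵢ).snd`, a finite dual basis of `M`, so `M` is finite projective.
Conversely, a finite dual basis `(aᵢ, φ vᵢ)` writes every `g : S ⊗[R] M →ₗ[S] S` as
`∑ g (1 ⊗ aᵢ) • (extension of φ vᵢ)`.
-/

open TensorProduct

universe u

variable (R : Type u) [CommRing R] (M : Type u) [AddCommGroup M] [Module R M]

/-- The `R`-linear map sending `w ∈ Hom_R(M, R)` to its `S`-linear extension
`M ⊗_R S → S`, `m ⊗ s ↦ w(m)·s`. -/
noncomputable def dualExtension (S : Type u) [CommRing S] [Algebra R S] :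
    (M →ₗ[R] R) →ₗ[R] ((S ⊗[R] M) →ₗ[S] S) where
  toFun w := LinearMap.liftBaseChange S ((Algebra.linearMap R S) ∘ₗ w)
  map_add' w₁ w₂ := by
    apply LinearMap.ext
    intro x
    induction x using TensorProduct.induction_on with
    | zero => simp
    | tmul s m => simp [mul_add]
    | add x y hx hy =>
        simp only [map_add, LinearMap.add_apply] at hx hy ⊢
        rw [hx, hy]
  map_smul' r w := by
    apply LinearMap.ext
    intro x
    induction x using TensorProduct.induction_on with
    | zero => simp
    | tmul s m => simp [Algebra.smul_def, mul_left_comm, mul_comm]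
    | add x y hx hy =>
        simp only [map_add, LinearMap.smul_apply, RingHom.id_apply] at hx hy ⊢
        rw [hx, hy]

theorem Module.finite_and_projective_iff_exists_sum_smul_eq {A P : Type*} [Semiring A]
    [AddCommMonoid P] [Module A P] :
    (Module.Finite A P ∧ Module.Projective A P) ↔
      ∃ (n : ℕ) (a : Fin n → P) (w : Fin n → Module.Dual A P), ∀ x, ∑ i, w i x • a i = x := by
  constructor
  · rintro ⟨_, _⟩
    obtain ⟨n, f, g, -, -, hfg⟩ := Module.Finite.exists_comp_eq_id_of_projective A P
    refine ⟨n, fun i => f (Pi.single i 1), fun i => LinearMap.proj i ∘ₗ g, fun x => ?_⟩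
    calc ∑ i, g x i • f (Pi.single i 1) = f (∑ i, g x i • Pi.single i 1) := by simp [map_sum]
      _ = f (g x) := by congr; ext; simp [Pi.single_apply]
      _ = x := LinearMap.congr_fun hfg x
  · rintro ⟨n, a, w, h⟩
    let s := Fintype.linearCombination A a
    let i := LinearMap.pi w
    have hsi : s ∘ₗ i = LinearMap.id :=
      LinearMap.ext fun x => by simp [s, i, Fintype.linearCombination_apply, h]
    exact ⟨.of_surjective s fun x => ⟨i x, LinearMap.congr_fun hsi x⟩, .of_split i s hsi⟩

section

variable {R M} {S : Type u} [CommRing S] [Algebra R S]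
  {N : Type*} [AddCommMonoid N] [Module R N] {φ : N →ₗ[R] Module.Dual R M}

@[simp]
theorem dualExtension_apply_tmul (w : Module.Dual R M) (s : S) (m : M) :
    dualExtension R M S w (s ⊗ₜ m) = s * algebraMap R S (w m) :=
  rfl

theorem eq_sum_smul_dualExtension {n : ℕ} {a : Fin n → M} {w : Fin n → Module.Dual R M}
    (h : ∀ m, ∑ i, w i m • a i = m) (g : S ⊗[R] M →ₗ[S] S) :
    g = ∑ i, g (1 ⊗ₜ a i) • dualExtension R M S (w i) := by
  ext m
  conv_lhs => rw [← h m]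
  simp [map_sum, Algebra.smul_def, mul_comm]

theorem exists_eq_sum_smul_dualExtension_of_surjective
    (hφ : Function.Surjective (LinearMap.liftBaseChange S (dualExtension R M S ∘ₗ φ)))
    (g : S ⊗[R] M →ₗ[S] S) :
    ∃ (n : ℕ) (c : Fin n → S) (v : Fin n → N), g = ∑ i, c i • dualExtension R M S (φ (v i)) := by
  have hg : g ∈ Submodule.span S (Set.range (dualExtension R M S ∘ₗ φ)) := by
    rw [← LinearMap.coe_range, ← LinearMap.range_liftBaseChange]
    exact hφ g
  obtain ⟨n, c, e, rfl⟩ := Submodule.mem_span_set'.mp hg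
  choose v hv using fun i => (e i).2
  exact ⟨n, c, v, Finset.sum_congr rfl fun i _ => by rw [← hv i, LinearMap.comp_apply]⟩

theorem surjective_of_surjective_liftBaseChange_self
    (h : Function.Surjective (LinearMap.liftBaseChange R (dualExtension R M R ∘ₗ φ))) :
    Function.Surjective φ := by
  intro w
  obtain ⟨n, c, v, hw⟩ :=
    exists_eq_sum_smul_dualExtension_of_surjective h (LinearMap.liftBaseChange R w)
  refine ⟨∑ i, c i • v i, LinearMap.ext fun m => ?_⟩
  simpa [mul_comm] using (LinearMap.congr_fun hw (1 ⊗ₜ m)).symm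

theorem surjective_liftBaseChange_dualExtension [Module.Finite R M] [Module.Projective R M]
    (hφ : Function.Surjective φ) :
    Function.Surjective (LinearMap.liftBaseChange S (dualExtension R M S ∘ₗ φ)) := by
  obtain ⟨n, a, w, h⟩ := Module.finite_and_projective_iff_exists_sum_smul_eq.mp ⟨‹_›, ‹_›⟩
  choose v hv using fun i => hφ (w i)
  intro g
  refine ⟨∑ i, g (1 ⊗ₜ a i) ⊗ₜ v i, ?_⟩
  simpa [map_sum, hv] using (eq_sum_smul_dualExtension h g).symm

theorem finite_and_projective_of_forall_surjective_liftBaseChange_dualExtension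
    (h : ∀ (S : Type u) [CommRing S] [Algebra R S],
      Function.Surjective (LinearMap.liftBaseChange S (dualExtension R M S ∘ₗ φ))) :
    Module.Finite R M ∧ Module.Projective R M := by
  -- `TrivSqZeroExt R M` is a commutative ring once the right action of `R` on `M` is the left one.
  let : Module Rᵐᵒᵖ M := Module.compHom _ ((RingHom.id R).fromOpposite mul_comm)
  have : IsCentralScalar R M := ⟨fun _ _ => rfl⟩
  obtain ⟨n, c, v, hc⟩ := exists_eq_sum_smul_dualExtension_of_surjective (h (TrivSqZeroExt R M))
    (LinearMap.liftBaseChange _ (TrivSqZeroExt.inrHom R M))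
  refine Module.finite_and_projective_iff_exists_sum_smul_eq.mpr
    ⟨n, fun i => (c i).snd, fun i => φ (v i), fun m => ?_⟩
  simpa [TrivSqZeroExt.snd_sum, TrivSqZeroExt.algebraMap_eq_inl] using
    (congrArg TrivSqZeroExt.snd (LinearMap.congr_fun hc (1 ⊗ₜ m))).symm

end

/-- Given `φ : N → Hom_R(M,R)`, the induced maps
`N ⊗_R S → Hom_S(M ⊗_R S, S)`, `n ⊗ s ↦ s · (extension of φ(n))`, are surjective for
every commutative `R`-algebra `S` iff `M` is finitely generated projective and `φ` is
surjective. -/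
theorem surjective_toDual_baseChange_iff_finite_projective_and_surjective
    (N : Type u) [AddCommGroup N] [Module R N] (φ : N →ₗ[R] (M →ₗ[R] R)) :
    (∀ (S : Type u) [CommRing S] [Algebra R S],
        Function.Surjective
          (LinearMap.liftBaseChange S ((dualExtension R M S) ∘ₗ φ) :
            S ⊗[R] N →ₗ[S] ((S ⊗[R] M) →ₗ[S] S)))
      ↔ (Module.Finite R M ∧ Module.Projective R M ∧ Function.Surjective φ) := by
  refine ⟨fun h => ?_, fun ⟨_, _, hφ⟩ S _ _ => surjective_liftBaseChange_dualExtension hφ⟩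
  obtain ⟨hfin, hproj⟩ := finite_and_projective_of_forall_surjective_liftBaseChange_dualExtension h
  exact ⟨hfin, hproj, surjective_of_surjective_liftBaseChange_self (h R)⟩
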